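/- (Proposition 3, terminal-boundary case, one dimension.) Let θ ∈ [0,1] be real and N a positive integer. Let Y = {1,…,N+1} and identify X = {2,…,N+1} with {1,…,N} via j ↦ j−1. Let π map a pair (s,l) with l ≥ 1 and s+l−1 ≥ 2 to the restricted patch on X with initial position max(s,2)−1 and side-length s+l−max(s,2). Then for every s_X ∈ {1,…,N} and every l_X ∈ {1,…,N−s_X+1}: P_Y({(s,l) : l ≥ 1, s+l−1 ≥ 2, π(s,l) = (s_X,l_X)}) / P_Y({(s,l) : l ≥ 1, s+l−1 ≥ 2}) = P_X({(s_X,l_X)}) / P_X({(s,l) : l ≥ 1}), where P_Y and P_X denote the original-construction candidate-patch distributions on dimension sizes N+1 and N respectively. -/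

import Mathlib

/-- Initial-position factor `c`: `c θ 1 = 1`, `c θ s = 1 - θ` for `s ≥ 2`. -/
noncomputable def c (θ : ℝ) (s : ℕ) : ℝ := if s = 1 then 1 else 1 - θ

/-- Truncated geometric side-length distribution on dimension size `N` given start `s`. -/
noncomputable def q (θ : ℝ) (N s l : ℕ) : ℝ :=
  if l = N - s + 1 then θ ^ (N - s) else θ ^ (l - 1) * (1 - θ)

/-- Conditional law of the side-length `l` given the start `s` in the original construction. -/
noncomputable def condL (θ : ℝ) (N s l : ℕ) : ℝ :=
  if l = 0 then (if s = 1 then 0 else θ) else c θ s * q θ N s l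

/-- The original-construction candidate-patch distribution on dimension size `N`. -/
noncomputable def origP (θ : ℝ) (N : ℕ) (p : ℕ × ℕ) : ℝ :=
  if 1 ≤ p.1 ∧ p.1 ≤ N ∧ p.2 ≤ N - p.1 + 1 then (1 / (N : ℝ)) * condL θ N p.1 p.2 else 0

/-!
Restriction to `X = {2,…,N+1}` shifts a patch starting at `s ≥ 3` by one cell, and the length law
`q` is translation invariant. A patch of length `l` at the first cell of `X` comes from `(2, l)`,
of weight `(1 - θ) q`, and from `(1, l + 1)`, of weight `θ q` (one more geometric step, with
`c = 1`); together they carry the weight `q` of a start at `1` on `X`. The only nonempty patch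
lost is `(1, 1)`, of mass `(1 - θ)/(N+1)`, which is that of the extra start `N+1` on `Y`. So
numerator and denominator on `Y` are those on `X` with `1/N` replaced by `1/(N+1)`.
-/

open Finset

section Mass

variable (θ : ℝ)

theorem sum_Icc_pow_pred_mul_one_sub (K : ℕ) :
    ∑ l ∈ Icc 1 K, θ ^ (l - 1) * (1 - θ) = 1 - θ ^ K := by
  induction K with
  | zero => simp
  | succ K ih =>
    rw [sum_Icc_succ_top (by omega), ih, Nat.add_sub_cancel]
    ring

theorem sum_q_eq_one (M s : ℕ) : ∑ l ∈ Icc 1 (M - s + 1), q θ M s l = 1 := by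
  have h_short : ∀ l ∈ Icc 1 (M - s), q θ M s l = θ ^ (l - 1) * (1 - θ) := by
    intro l hl
    rw [mem_Icc] at hl
    rw [q, if_neg (by omega)]
  rw [sum_Icc_succ_top (by omega), sum_congr rfl h_short, sum_Icc_pow_pred_mul_one_sub, q,
    if_pos rfl]
  ring

theorem q_shift (M s l : ℕ) : q θ (M + 1) (s + 1) l = q θ M s l := by
  simp only [q, Nat.add_sub_add_right]

theorem q_succ_length {M s l : ℕ} (hs : s ≤ M) (hl : 1 ≤ l) :
    q θ (M + 1) s (l + 1) = θ * q θ M s l := by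
  unfold q
  by_cases h : l = M - s + 1
  · rw [if_pos (by omega), if_pos h, show M + 1 - s = M - s + 1 by omega, pow_succ']
  · rw [if_neg (by omega), if_neg h, Nat.add_sub_cancel, show l = l - 1 + 1 by omega,
      Nat.add_sub_cancel, pow_succ']
    ring

theorem origP_eq_of_le {M s l : ℕ} (hs : 1 ≤ s) (hsM : s ≤ M) (hl : 1 ≤ l) (hlM : l ≤ M - s + 1) :
    origP θ M (s, l) = c θ s * q θ M s l / M := by
  rw [origP, if_pos ⟨hs, hsM, hlM⟩, condL, if_neg (show l ≠ 0 by omega)]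
  ring

theorem sum_origP_fixed_start {M s : ℕ} (hs : 1 ≤ s) (hsM : s ≤ M) :
    ∑ l ∈ Icc 1 M, origP θ M (s, l) = c θ s / M := by
  have h_sub : Icc 1 (M - s + 1) ⊆ Icc 1 M := Icc_subset_Icc_right (by omega)
  have h_out : ∀ l ∈ Icc 1 M, l ∉ Icc 1 (M - s + 1) → origP θ M (s, l) = 0 := by
    intro l hl hl'
    rw [mem_Icc] at hl hl'
    rw [origP, if_neg (by omega)]
  have h_in : ∀ l ∈ Icc 1 (M - s + 1), origP θ M (s, l) = c θ s * q θ M s l / M := by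
    intro l hl
    rw [mem_Icc] at hl
    exact origP_eq_of_le θ hs hsM hl.1 hl.2
  rw [← sum_subset h_sub h_out, sum_congr rfl h_in, ← sum_div, ← mul_sum, sum_q_eq_one, mul_one]

theorem sum_origP_nonempty (M : ℕ) :
    ∑ p ∈ Icc 1 M ×ˢ Icc 1 M, origP θ M p = (∑ s ∈ Icc 1 M, c θ s) / M := by
  rw [sum_product, sum_div]
  refine sum_congr rfl fun s hs => ?_
  rw [mem_Icc] at hs
  exact sum_origP_fixed_start θ hs.1 hs.2

end Mass

section Restriction

variable (θ : ℝ) {N : ℕ}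

theorem filter_restriction_nonempty :
    (Icc 1 (N + 1) ×ˢ Icc 0 (N + 1)).filter (fun p => 1 ≤ p.2 ∧ 2 ≤ p.1 + p.2 - 1) =
      (Icc 1 (N + 1) ×ˢ Icc 1 (N + 1)).erase (1, 1) := by
  ext ⟨s, l⟩
  simp only [mem_filter, mem_erase, mem_product, mem_Icc, ne_eq, Prod.mk.injEq]
  omega

theorem sum_origP_restriction_nonempty (hN : 0 < N) :
    ∑ p ∈ Icc 1 (N + 1) ×ˢ Icc 0 (N + 1),
        (if 1 ≤ p.2 ∧ 2 ≤ p.1 + p.2 - 1 then origP θ (N + 1) p else 0) =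
      (∑ s ∈ Icc 1 N, c θ s) / (N + 1) := by
  have h_mem : ((1 : ℕ), (1 : ℕ)) ∈ Icc 1 (N + 1) ×ˢ Icc 1 (N + 1) := by simp
  have h_one_one : origP θ (N + 1) (1, 1) = c θ (N + 1) / (N + 1) := by
    rw [origP_eq_of_le θ le_rfl (by omega) le_rfl (by omega), q, if_neg (by omega), c, c,
      if_pos rfl, if_neg (by omega)]
    push_cast
    ring
  rw [← sum_filter, filter_restriction_nonempty, sum_erase_eq_sub h_mem,
    sum_origP_nonempty, h_one_one, sum_Icc_succ_top (by omega)]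
  push_cast
  ring

theorem filter_restriction_eq_start_one {lX : ℕ} (hl : 1 ≤ lX) (hlN : lX ≤ N) :
    (Icc 1 (N + 1) ×ˢ Icc 0 (N + 1)).filter (fun p => 1 ≤ p.2 ∧ 2 ≤ p.1 + p.2 - 1 ∧
        max p.1 2 - 1 = 1 ∧ p.1 + p.2 - max p.1 2 = lX) = {(1, lX + 1), (2, lX)} := by
  ext ⟨s, l⟩
  simp only [mem_filter, mem_product, mem_Icc, mem_insert, mem_singleton, Prod.mk.injEq]
  omega

theorem filter_restriction_eq_shift {sX lX : ℕ} (hs : 2 ≤ sX) (hsN : sX ≤ N) (hl : 1 ≤ lX)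
    (hlN : lX ≤ N - sX + 1) :
    (Icc 1 (N + 1) ×ˢ Icc 0 (N + 1)).filter (fun p => 1 ≤ p.2 ∧ 2 ≤ p.1 + p.2 - 1 ∧
        max p.1 2 - 1 = sX ∧ p.1 + p.2 - max p.1 2 = lX) = {(sX + 1, lX)} := by
  ext ⟨s, l⟩
  simp only [mem_filter, mem_product, mem_Icc, mem_singleton, Prod.mk.injEq]
  omega

theorem sum_origP_restriction_eq {sX lX : ℕ} (hs : 1 ≤ sX) (hsN : sX ≤ N) (hl : 1 ≤ lX)
    (hlN : lX ≤ N - sX + 1) :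
    ∑ p ∈ Icc 1 (N + 1) ×ˢ Icc 0 (N + 1),
        (if 1 ≤ p.2 ∧ 2 ≤ p.1 + p.2 - 1 ∧ max p.1 2 - 1 = sX ∧ p.1 + p.2 - max p.1 2 = lX then
          origP θ (N + 1) p else 0) =
      c θ sX * q θ N sX lX / (N + 1) := by
  rw [← sum_filter]
  rcases Nat.eq_or_lt_of_le hs with rfl | hs
  · rw [filter_restriction_eq_start_one hl (by omega), sum_pair (by simp),
      origP_eq_of_le θ le_rfl (by omega) (by omega) (by omega),
      origP_eq_of_le θ (by omega) (by omega) hl (by omega),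
      q_succ_length θ (by omega) hl, q_shift θ N 1 lX, c, c, if_pos rfl, if_neg (by omega)]
    push_cast
    ring
  · rw [filter_restriction_eq_shift hs hsN hl hlN, sum_singleton,
      origP_eq_of_le θ (by omega) (by omega) hl (by omega), q_shift, c, c,
      if_neg (by omega), if_neg (by omega)]
    push_cast
    ring

end Restriction

theorem spp_position_self_consistent_terminal_general (θ : ℝ) (N : ℕ) (sX lX : ℕ)
    (hsX : 1 ≤ sX ∧ sX ≤ N) (hlX : 1 ≤ lX ∧ lX ≤ N - sX + 1) :
    (∑ p ∈ Finset.Icc 1 (N + 1) ×ˢ Finset.Icc 0 (N + 1),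
        if 1 ≤ p.2 ∧ 2 ≤ p.1 + p.2 - 1 ∧
            max p.1 2 - 1 = sX ∧ p.1 + p.2 - max p.1 2 = lX then
          origP θ (N + 1) p else 0) /
    (∑ p ∈ Finset.Icc 1 (N + 1) ×ˢ Finset.Icc 0 (N + 1),
        if 1 ≤ p.2 ∧ 2 ≤ p.1 + p.2 - 1 then origP θ (N + 1) p else 0)
      = origP θ N (sX, lX) /
        (∑ p ∈ Finset.Icc 1 N ×ˢ Finset.Icc 1 N, origP θ N p) := by
  obtain ⟨hs, hsN⟩ := hsX
  obtain ⟨hl, hlN⟩ := hlX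
  rw [sum_origP_restriction_eq θ hs hsN hl hlN, sum_origP_restriction_nonempty θ (by omega),
    sum_origP_nonempty, origP_eq_of_le θ hs hsN hl hlN,
    div_div_div_cancel_right₀ (by positivity),
    div_div_div_cancel_right₀ (Nat.cast_ne_zero.mpr (by omega))]

/-- Proposition 3, terminal-boundary case, one dimension: with `Y = {1,…,N+1}`,
`X = {2,…,N+1}` identified with `{1,…,N}` via `j ↦ j−1`, and
`π (s,l) = (max s 2 − 1, s + l − max s 2)` defined on patches with `l ≥ 1` and
`s + l − 1 ≥ 2`, for every admissible target `(s_X, l_X)` on `X`: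
`P_Y(π⁻¹(s_X,l_X)) / P_Y(restriction nonempty) = P_X((s_X,l_X)) / P_X(l ≥ 1)`. -/
theorem spp_position_self_consistent_terminal (θ : ℝ) (hθ0 : 0 ≤ θ) (hθ1 : θ ≤ 1)
    (N : ℕ) (hN : 0 < N) (sX lX : ℕ)
    (hsX : 1 ≤ sX ∧ sX ≤ N) (hlX : 1 ≤ lX ∧ lX ≤ N - sX + 1) :
    (∑ p ∈ Finset.Icc 1 (N + 1) ×ˢ Finset.Icc 0 (N + 1),
        if 1 ≤ p.2 ∧ 2 ≤ p.1 + p.2 - 1 ∧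
            max p.1 2 - 1 = sX ∧ p.1 + p.2 - max p.1 2 = lX then
          origP θ (N + 1) p else 0) /
    (∑ p ∈ Finset.Icc 1 (N + 1) ×ˢ Finset.Icc 0 (N + 1),
        if 1 ≤ p.2 ∧ 2 ≤ p.1 + p.2 - 1 then origP θ (N + 1) p else 0)
      = origP θ N (sX, lX) /
        (∑ p ∈ Finset.Icc 1 N ×ˢ Finset.Icc 1 N, origP θ N p) :=
  spp_position_self_consistent_terminal_general θ N sX lX hsX hlX
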